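/- arXiv:2302.13934 — 2 statements merged into one kernel-verified Lean document; each statement's English description precedes it below -/
import Mathlib

section
/- Let P and Q be probability measures on a measurable space X, and let h : X → [0, M] be measurable with M ≥ 0. Write the Lebesgue decomposition P = P_ac + P_s with P_ac ≪ Q and P_s ⊥ Q, let ρ := dP_ac/dQ be the Radon–Nikodym derivative, and let S be a Q-null set carrying P_s (i.e. P_s(Sᶜ) = 0). Then for every t > 0: E_P[h] ≤ M · P(S ∪ {ρ > t}) + t · E_Q[h]; consequently E_P[h] ≤ inf_{t > 0} ( M · P(S ∪ {ρ > t}) + t · E_Q[h] ). -/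
open MeasureTheory
open scoped ENNReal

/-- change of measure via density-ratio tails. -/
theorem change_of_measure_tail_bound
    {α : Type*} [MeasurableSpace α] (P Q : Measure α)
    [IsProbabilityMeasure P] [IsProbabilityMeasure Q]
    (h : α → ℝ) (M : ℝ) (hM : 0 ≤ M) (hmeas : Measurable h)
    (hrange : ∀ x, h x ∈ Set.Icc (0 : ℝ) M)
    (S : Set α) (hSmeas : MeasurableSet S) (hQS : Q S = 0)
    (hPS : P.singularPart Q Sᶜ = 0) :
    (∀ t : ℝ, 0 < t →
      (∫ x, h x ∂P)
        ≤ M * (P (S ∪ {x | ENNReal.ofReal t < P.rnDeriv Q x})).toReal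
            + t * ∫ x, h x ∂Q)
    ∧
    (∫ x, h x ∂P)
      ≤ sInf {b : ℝ | ∃ t : ℝ, 0 < t ∧
          b = M * (P (S ∪ {x | ENNReal.ofReal t < P.rnDeriv Q x})).toReal
                + t * ∫ x, h x ∂Q} := by
  set g : α → ℝ≥0∞ := fun x => ENNReal.ofReal (h x) with hg
  have hgmeas : Measurable g := hmeas.ennreal_ofReal
  have hρmeas : Measurable (P.rnDeriv Q) := Measure.measurable_rnDeriv P Q
  have hgle : ∀ x, g x ≤ ENNReal.ofReal M := fun x =>
    ENNReal.ofReal_le_ofReal (hrange x).2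
  have hint : ∀ (μ : Measure α) [IsProbabilityMeasure μ],
      ∫ x, h x ∂μ = (∫⁻ x, g x ∂μ).toReal := by
    intro μ _
    rw [integral_eq_lintegral_of_nonneg_ae
      (Filter.Eventually.of_forall fun x => (hrange x).1)
      hmeas.aestronglyMeasurable]
  have hfin : ∀ (μ : Measure α) [IsProbabilityMeasure μ],
      ∫⁻ x, g x ∂μ ≤ ENNReal.ofReal M := by
    intro μ _
    calc ∫⁻ x, g x ∂μ ≤ ∫⁻ _, ENNReal.ofReal M ∂μ :=
          lintegral_mono hgle
      _ = ENNReal.ofReal M := by simp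
  have main : ∀ t : ℝ, 0 < t →
      (∫ x, h x ∂P)
        ≤ M * (P (S ∪ {x | ENNReal.ofReal t < P.rnDeriv Q x})).toReal
            + t * ∫ x, h x ∂Q := by
    intro t ht
    set A : Set α := S ∪ {x | ENNReal.ofReal t < P.rnDeriv Q x} with hA
    have hAmeas : MeasurableSet A :=
      hSmeas.union (measurableSet_lt measurable_const hρmeas)
    have key : ∫⁻ x, g x ∂P
        ≤ ENNReal.ofReal M * P A + ENNReal.ofReal t * ∫⁻ x, g x ∂Q := by
      rw [← lintegral_add_compl (f := g) (μ := P) hAmeas]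
      gcongr
      · -- integral over A
        calc ∫⁻ x in A, g x ∂P ≤ ∫⁻ _ in A, ENNReal.ofReal M ∂P :=
              lintegral_mono hgle
          _ = ENNReal.ofReal M * P A := by
              rw [setLIntegral_const, mul_comm]
      · -- integral over Aᶜ
        have hdec : P = P.singularPart Q + Q.withDensity (P.rnDeriv Q) :=
          (P.haveLebesgueDecomposition_add Q)
        have hsing : (P.singularPart Q) Aᶜ = 0 := by
          have : Aᶜ ⊆ Sᶜ := Set.compl_subset_compl.mpr Set.subset_union_left
          exact measure_mono_null this hPS
        calc ∫⁻ x in Aᶜ, g x ∂P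
            = ∫⁻ x in Aᶜ, g x ∂(P.singularPart Q)
              + ∫⁻ x in Aᶜ, g x ∂(Q.withDensity (P.rnDeriv Q)) := by
              conv_lhs => rw [hdec]
              simp [Measure.restrict_add, lintegral_add_measure]
          _ = ∫⁻ x in Aᶜ, g x ∂(Q.withDensity (P.rnDeriv Q)) := by
              rw [setLIntegral_measure_zero _ _ hsing, zero_add]
          _ = ∫⁻ x in Aᶜ, P.rnDeriv Q x * g x ∂Q := by
              rw [restrict_withDensity hAmeas.compl,
                lintegral_withDensity_eq_lintegral_mul _ hρmeas hgmeas]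
              rfl
          _ ≤ ∫⁻ x in Aᶜ, ENNReal.ofReal t * g x ∂Q := by
              apply setLIntegral_mono' hAmeas.compl
              intro x hx
              have hx' : ¬ ENNReal.ofReal t < P.rnDeriv Q x := fun hc =>
                hx (Set.mem_union_right _ hc)
              exact mul_le_mul_left (not_lt.mp hx') _
          _ = ENNReal.ofReal t * ∫⁻ x in Aᶜ, g x ∂Q := by
              rw [lintegral_const_mul _ hgmeas]
          _ ≤ ENNReal.ofReal t * ∫⁻ x, g x ∂Q := by
              gcongr
              exact Measure.restrict_le_self
    have hRfin : ENNReal.ofReal M * P A + ENNReal.ofReal t * ∫⁻ x, g x ∂Q ≠ ⊤ := by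
      apply ENNReal.add_ne_top.mpr
      constructor
      · exact ENNReal.mul_ne_top ENNReal.ofReal_ne_top (measure_ne_top P A)
      · exact ENNReal.mul_ne_top ENNReal.ofReal_ne_top
          ((lt_of_le_of_lt (hfin Q) ENNReal.ofReal_lt_top).ne)
    have := ENNReal.toReal_mono hRfin key
    rw [ENNReal.toReal_add (ENNReal.mul_ne_top ENNReal.ofReal_ne_top (measure_ne_top P A))
        (ENNReal.mul_ne_top ENNReal.ofReal_ne_top
          ((lt_of_le_of_lt (hfin Q) ENNReal.ofReal_lt_top).ne)),
      ENNReal.toReal_mul, ENNReal.toReal_mul,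
      ENNReal.toReal_ofReal hM, ENNReal.toReal_ofReal ht.le] at this
    rw [hint P, hint Q]
    exact this
  refine ⟨main, ?_⟩
  apply le_csInf
  · exact ⟨_, 1, one_pos, rfl⟩
  · rintro b ⟨t, ht, rfl⟩
    exact main t ht
end

section
/- Assume |f| ≤ B and |g| ≤ B pointwise for all f ∈ F and g ∈ G (in particular |f⋆|, |g⋆| ≤ B). For t > 0 define Δ_{x,y}(t) := P_test[(x, y) ∈ S_{xy} ∪ {ρ_{xy} > t}] and Δ_y(t) := P_test[y ∈ S_y ∪ {ρ_y > t}], where ρ_{xy} is the Radon–Nikodym derivative of the absolutely continuous part of the joint law of (x, y) under P_test with respect to its law under P_train, S_{xy} is a P_train-null set carrying the singular part (and ρ_y, S_y are defined analogously for the marginal law of y). Then for every (f, g) ∈ F × G: R_test(f, g) ≤ inf_{t₁, t₂ > 0} 2 ( t₁ R_train[f] + t₂ R_train(f, g) + 16 B² Δ_{x,y}(t₁) + 16 B² Δ_y(t₂) ). -/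
open MeasureTheory ProbabilityTheory
open scoped ENNReal NNReal

noncomputable section

variable {X Y : Type*} [MeasurableSpace X] [MeasurableSpace Y]

/-- excess risk of the pair (f,g) under the covariate law μ. -/
def risk (μ : Measure (X × Y)) (fstar : X → ℝ) (gstar : Y → ℝ)
    (f : X → ℝ) (g : Y → ℝ) : ℝ :=
  ∫ w, ((f w.1 - fstar w.1) + (g w.2 - gstar w.2)) ^ 2 ∂μ

/-- conditional bias β_f = E_train[(f - f⋆)(x) | y], as a function on X × Y. -/
def bias (μtrain : Measure (X × Y)) (fstar f : X → ℝ) : X × Y → ℝ :=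
  μtrain[(fun w : X × Y => f w.1 - fstar w.1)|MeasurableSpace.comap Prod.snd inferInstance]

/-- per-function risk R_e[f]. -/
def riskF (μ μtrain : Measure (X × Y)) (fstar f : X → ℝ) : ℝ :=
  ∫ w, (f w.1 - fstar w.1 - bias μtrain fstar f w) ^ 2 ∂μ

/-- density-ratio tail of P against Q beyond level t, including the singular set S. -/
def tailMass {α : Type*} [MeasurableSpace α] (P Q : Measure α) (S : Set α) (t : ℝ) : ℝ :=
  (P (S ∪ {x | ENNReal.ofReal t < P.rnDeriv Q x})).toReal

set_option linter.unusedSectionVars false in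
lemma factor_snd {b : X × Y → ℝ}
    (hb : Measurable[MeasurableSpace.comap Prod.snd inferInstance] b) (x₀ : X) :
    Measurable (fun y => b (x₀, y)) ∧ ∀ w : X × Y, b w = b (x₀, w.2) := by
  constructor
  · intro s hs
    rcases MeasurableSpace.measurableSet_comap.mp (hb hs) with ⟨A, hA, hpre⟩
    have : (fun y => b (x₀, y)) ⁻¹' s = A := by
      ext y
      constructor
      · intro hy
        have h1 : (x₀, y) ∈ b ⁻¹' s := hy
        rw [← hpre] at h1
        exact h1
      · intro hy
        have h1 : (x₀, y) ∈ Prod.snd ⁻¹' A := hy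
        rw [hpre] at h1
        exact h1
    rwa [this]
  · intro w
    rcases MeasurableSpace.measurableSet_comap.mp
      (hb (measurableSet_singleton (b (x₀, w.2)))) with ⟨A, hA, hpre⟩
    have hx : (x₀, w.2) ∈ Prod.snd ⁻¹' A := by
      rw [hpre]; exact rfl
    have hw : w ∈ Prod.snd ⁻¹' A := hx
    rw [hpre] at hw
    simpa using hw

lemma tail_lintegral_bound {α : Type*} [MeasurableSpace α] (P Q : Measure α)
    [IsFiniteMeasure P] [IsFiniteMeasure Q]
    {S : Set α} (hS : MeasurableSet S) (hsing : P.singularPart Q Sᶜ = 0)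
    (t : ℝ) {φ : α → ℝ≥0∞} (hφ : Measurable φ) :
    ∫⁻ x in (S ∪ {x | ENNReal.ofReal t < P.rnDeriv Q x})ᶜ, φ x ∂P
      ≤ ENNReal.ofReal t * ∫⁻ x, φ x ∂Q := by
  have hρm : Measurable (P.rnDeriv Q) := Measure.measurable_rnDeriv P Q
  set E : Set α := S ∪ {x | ENNReal.ofReal t < P.rnDeriv Q x} with hE
  have hEm : MeasurableSet E := hS.union (measurableSet_lt measurable_const hρm)
  have hres : P.restrict Eᶜ = (Q.withDensity (P.rnDeriv Q)).restrict Eᶜ := by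
    conv_lhs => rw [Measure.haveLebesgueDecomposition_add P Q]
    rw [Measure.restrict_add, Measure.restrict_eq_zero.2
      (measure_mono_null (Set.compl_subset_compl.2 Set.subset_union_left) hsing), zero_add]
  calc ∫⁻ x in Eᶜ, φ x ∂P = ∫⁻ x in Eᶜ, φ x ∂(Q.withDensity (P.rnDeriv Q)) := by rw [hres]
    _ = ∫⁻ x in Eᶜ, (P.rnDeriv Q * φ) x ∂Q := by
        rw [restrict_withDensity hEm.compl, lintegral_withDensity_eq_lintegral_mul _ hρm hφ]
    _ ≤ ∫⁻ x in Eᶜ, ENNReal.ofReal t * φ x ∂Q := by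
        refine setLIntegral_mono (measurable_const.mul hφ) fun x hx => ?_
        have hxe : ¬ ENNReal.ofReal t < P.rnDeriv Q x := fun h => hx (Set.mem_union_right _ h)
        exact mul_le_mul_left (not_lt.1 hxe) _
    _ = ENNReal.ofReal t * ∫⁻ x in Eᶜ, φ x ∂Q := lintegral_const_mul _ hφ
    _ ≤ ENNReal.ofReal t * ∫⁻ x, φ x ∂Q :=
        mul_le_mul_right (setLIntegral_le_lintegral _ _) _

def mSnd (X Y : Type*) [MeasurableSpace Y] : MeasurableSpace (X × Y) :=
  MeasurableSpace.comap Prod.snd inferInstance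

set_option maxHeartbeats 2000000 in
/-- transfer bound via density-ratio tails. -/
theorem excess_risk_tail_bound
    (μtrain μtest : Measure (X × Y))
    [IsProbabilityMeasure μtrain] [IsProbabilityMeasure μtest]
    (F : Set (X → ℝ)) (G : Set (Y → ℝ)) (B : ℝ)
    (hFmeas : ∀ f ∈ F, Measurable f) (hGmeas : ∀ g ∈ G, Measurable g)
    (hFbd : ∀ f ∈ F, ∀ x, |f x| ≤ B) (hGbd : ∀ g ∈ G, ∀ y, |g y| ≤ B)
    (fstar : X → ℝ) (gstar : Y → ℝ) (hfstar : fstar ∈ F) (hgstar : gstar ∈ G)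
    (Sxy : Set (X × Y)) (hSxy : MeasurableSet Sxy) (hSxy0 : μtrain Sxy = 0)
    (hSxySing : μtest.singularPart μtrain Sxyᶜ = 0)
    (Sy : Set Y) (hSy : MeasurableSet Sy) (hSy0 : μtrain.map Prod.snd Sy = 0)
    (hSySing : (μtest.map Prod.snd).singularPart (μtrain.map Prod.snd) Syᶜ = 0) :
    ∀ f ∈ F, ∀ g ∈ G,
      risk μtest fstar gstar f g
        ≤ sInf {b : ℝ | ∃ t₁ t₂ : ℝ, 0 < t₁ ∧ 0 < t₂ ∧
            b = 2 * (t₁ * riskF μtrain μtrain fstar f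
                      + t₂ * risk μtrain fstar gstar f g
                      + 16 * B ^ 2 * tailMass μtest μtrain Sxy t₁
                      + 16 * B ^ 2 *
                          tailMass (μtest.map Prod.snd) (μtrain.map Prod.snd) Sy t₂)} := by
  intro f hf g hg
  -- nonemptiness and basic setup
  have hne : Nonempty (X × Y) := by
    by_contra hne
    rw [not_nonempty_iff] at hne
    have h1 : μtrain Set.univ = 1 := measure_univ
    rw [Set.univ_eq_empty_iff.2 hne, measure_empty] at h1
    exact zero_ne_one h1
  obtain ⟨⟨x₀, y₀⟩⟩ := hne
  have hB : (0:ℝ) ≤ B := le_trans (abs_nonneg _) (hFbd fstar hfstar x₀)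
  have hm : mSnd X Y ≤ Prod.instMeasurableSpace := measurable_snd.comap_le
  set u : X × Y → ℝ := fun w => (f w.1 - fstar w.1) + (g w.2 - gstar w.2) with hu_def
  set h : X × Y → ℝ := fun w => f w.1 - fstar w.1 with hh_def
  set β : X × Y → ℝ := bias μtrain fstar f with hβ_def
  have hβ_eq : β = μtrain[h|mSnd X Y] := rfl
  set a : X × Y → ℝ := fun w => f w.1 - fstar w.1 - β w with ha_def
  set b : X × Y → ℝ := fun w => (g w.2 - gstar w.2) + β w with hb_def
  -- measurability
  have hmf := hFmeas f hf
  have hmf' := hFmeas fstar hfstar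
  have hmg := hGmeas g hg
  have hmg' := hGmeas gstar hgstar
  have hmh : Measurable h := (hmf.comp measurable_fst).sub (hmf'.comp measurable_fst)
  have hmgp : Measurable (fun w : X × Y => g w.2 - gstar w.2) :=
    (hmg.comp measurable_snd).sub (hmg'.comp measurable_snd)
  have hmu : Measurable u := hmh.add hmgp
  have hβsm : StronglyMeasurable[mSnd X Y] β := by rw [hβ_eq]; exact stronglyMeasurable_condExp
  have hmβ : Measurable β := (hβsm.mono hm).measurable
  have hma : Measurable a := hmh.sub hmβ
  have hmb : Measurable b := hmgp.add hmβ
  have hmb_m : Measurable[mSnd X Y] b := by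
    have h1 : Measurable[mSnd X Y] (fun w : X × Y => g w.2 - gstar w.2) :=
      (hmg.comp (comap_measurable _)).sub
        (hmg'.comp (comap_measurable _))
    exact h1.add hβsm.measurable
  have hb_sm : StronglyMeasurable[mSnd X Y] b := hmb_m.stronglyMeasurable
  -- pointwise bounds
  have hh_bd : ∀ w : X × Y, |h w| ≤ 2*B := by
    intro w
    have h1 := abs_le.1 (hFbd f hf w.1)
    have h2 := abs_le.1 (hFbd fstar hfstar w.1)
    rw [abs_le]
    constructor <;> simp only [hh_def] <;> [linarith [h1.1, h2.2]; linarith [h1.2, h2.1]]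
  have hu_bd : ∀ w : X × Y, |u w| ≤ 4*B := by
    intro w
    have h1 := abs_le.1 (hFbd f hf w.1)
    have h2 := abs_le.1 (hFbd fstar hfstar w.1)
    have h3 := abs_le.1 (hGbd g hg w.2)
    have h4 := abs_le.1 (hGbd gstar hgstar w.2)
    rw [abs_le]
    constructor <;> simp only [hu_def] <;>
      [linarith [h1.1, h2.2, h3.1, h4.2]; linarith [h1.2, h2.1, h3.2, h4.1]]
  have hβ_bd : ∀ᵐ w ∂μtrain, |β w| ≤ 2*B := by
    have h2B : 0 ≤ 2*B := by linarith
    have hcb := ae_bdd_condExp_of_ae_bdd (m := mSnd X Y) (μ := μtrain) (R := ⟨2*B, h2B⟩) (f := h)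
      (ae_of_all _ fun w => by exact hh_bd w)
    rw [hβ_eq]
    exact hcb
  have ha_bd : ∀ᵐ w ∂μtrain, |a w| ≤ 4*B := by
    filter_upwards [hβ_bd] with w hw
    have := hh_bd w
    simp only [ha_def]
    rw [abs_le] at *
    constructor <;> [skip; skip] <;>
      first
        | (have hh' : h w = f w.1 - fstar w.1 := rfl; rw [← hh']; constructor) <;> skip
        | skip
    · have hh' : h w = f w.1 - fstar w.1 := rfl
      rw [← hh']; linarith [this.1, hw.2]
    · have hh' : h w = f w.1 - fstar w.1 := rfl
      rw [← hh']; linarith [this.2, hw.1]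
  have hb_bd : ∀ᵐ w ∂μtrain, |b w| ≤ 4*B := by
    filter_upwards [hβ_bd] with w hw
    have h3 := abs_le.1 (hGbd g hg w.2)
    have h4 := abs_le.1 (hGbd gstar hgstar w.2)
    rw [abs_le] at *
    constructor <;> simp only [hb_def] <;>
      [linarith [h3.1, h4.2, hw.1]; linarith [h3.2, h4.1, hw.2]]
  -- integrability
  have int_of_bd : ∀ {φ : X × Y → ℝ}, Measurable φ → ∀ C : ℝ,
      (∀ᵐ w ∂μtrain, |φ w| ≤ C) → Integrable φ μtrain := by
    intro φ hφ C hC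
    exact (integrable_const C).mono' hφ.aestronglyMeasurable
      (by filter_upwards [hC] with w hw; simpa using hw)
  have int_h : Integrable h μtrain := int_of_bd hmh (2*B) (ae_of_all _ hh_bd)
  have int_a : Integrable a μtrain := int_of_bd hma (4*B) ha_bd
  have int_a2 : Integrable (fun w => a w ^ 2) μtrain := by
    refine int_of_bd (hma.pow_const 2) (16*B^2) ?_
    filter_upwards [ha_bd] with w hw
    rw [abs_of_nonneg (sq_nonneg _)]
    nlinarith [abs_nonneg (a w), sq_abs (a w)]
  have int_b2 : Integrable (fun w => b w ^ 2) μtrain := by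
    refine int_of_bd (hmb.pow_const 2) (16*B^2) ?_
    filter_upwards [hb_bd] with w hw
    rw [abs_of_nonneg (sq_nonneg _)]
    nlinarith [abs_nonneg (b w), sq_abs (b w)]
  have int_ba : Integrable (fun w => b w * a w) μtrain := by
    refine int_of_bd (hmb.mul hma) (16*B^2) ?_
    filter_upwards [ha_bd, hb_bd] with w hwa hwb
    rw [abs_mul]
    nlinarith [abs_nonneg (a w), abs_nonneg (b w)]
  -- orthogonality
  have hcondexp_a : μtrain[a|mSnd X Y] =ᵐ[μtrain] 0 := by
    have hab : a = h - β := rfl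
    have h1 : μtrain[a|mSnd X Y] =ᵐ[μtrain] μtrain[h|mSnd X Y] - μtrain[β|mSnd X Y] := by
      rw [hab]
      exact condExp_sub int_h (hβ_eq ▸ integrable_condExp) (mSnd X Y)
    have h2 : μtrain[β|mSnd X Y] = β := condExp_of_stronglyMeasurable hm hβsm (hβ_eq ▸ integrable_condExp)
    filter_upwards [h1] with w hw
    rw [hw, Pi.sub_apply, h2, ← hβ_eq, Pi.zero_apply, sub_self]
  have horth : ∫ w, b w * a w ∂μtrain = 0 := by
    have h0 : μtrain[(fun w => b w * a w)|mSnd X Y] =ᵐ[μtrain] 0 := by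
      have hpull : μtrain[b * a|mSnd X Y] =ᵐ[μtrain] b * μtrain[a|mSnd X Y] :=
        condExp_mul_of_stronglyMeasurable_left hb_sm int_ba int_a
      filter_upwards [hpull, hcondexp_a] with w h1 h2
      have : (fun w => b w * a w) = b * a := rfl
      rw [this, h1, Pi.mul_apply, h2]
      simp
    calc ∫ w, b w * a w ∂μtrain
        = ∫ w, (μtrain[(fun w => b w * a w)|mSnd X Y]) w ∂μtrain := (integral_condExp hm).symm
      _ = ∫ w, (0 : X × Y → ℝ) w ∂μtrain := integral_congr_ae h0
      _ = 0 := by simp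
  have hu_ab : ∀ w, u w = a w + b w := by
    intro w; simp only [hu_def, ha_def, hb_def]; ring
  have hJensen : ∫ w, b w ^ 2 ∂μtrain ≤ ∫ w, u w ^ 2 ∂μtrain := by
    have hexp : ∫ w, u w ^ 2 ∂μtrain
        = ∫ w, a w ^ 2 ∂μtrain + ∫ w, (2*(b w * a w) + b w ^ 2) ∂μtrain := by
      calc ∫ w, u w ^ 2 ∂μtrain
          = ∫ w, (a w ^ 2 + (2*(b w * a w) + b w ^ 2)) ∂μtrain := by
            refine integral_congr_ae (ae_of_all _ fun w => ?_)
            show u w ^ 2 = a w ^ 2 + (2*(b w * a w) + b w ^ 2)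
            rw [hu_ab w]; ring
        _ = _ := integral_add int_a2 ((int_ba.const_mul 2).add int_b2)
    have hexp2 : ∫ w, (2*(b w * a w) + b w ^ 2) ∂μtrain
        = 2 * ∫ w, b w * a w ∂μtrain + ∫ w, b w ^ 2 ∂μtrain := by
      rw [integral_add (int_ba.const_mul 2) int_b2, integral_const_mul]
    have ha2 : (0:ℝ) ≤ ∫ w, a w ^ 2 ∂μtrain := integral_nonneg fun w => sq_nonneg _
    rw [hexp, hexp2, horth]
    linarith
  -- factorization of b through snd
  obtain ⟨hmbt, hbt⟩ := factor_snd hmb_m x₀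
  -- now the main estimate
  refine le_csInf ⟨_, ⟨1, 1, one_pos, one_pos, rfl⟩⟩ ?_
  rintro r ⟨t₁, t₂, ht₁, ht₂, rfl⟩
  haveI : IsProbabilityMeasure (μtest.map (Prod.snd : X × Y → Y)) :=
    Measure.isProbabilityMeasure_map measurable_snd.aemeasurable
  haveI : IsProbabilityMeasure (μtrain.map (Prod.snd : X × Y → Y)) :=
    Measure.isProbabilityMeasure_map measurable_snd.aemeasurable
  set E₁ : Set (X × Y) := Sxy ∪ {w | ENNReal.ofReal t₁ < μtest.rnDeriv μtrain w} with hE₁_def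
  set E₂ : Set Y := Sy ∪ {y | ENNReal.ofReal t₂ <
    (μtest.map Prod.snd).rnDeriv (μtrain.map Prod.snd) y} with hE₂_def
  have hE₁m : MeasurableSet E₁ :=
    hSxy.union (measurableSet_lt measurable_const (Measure.measurable_rnDeriv _ _))
  have hE₂m : MeasurableSet E₂ :=
    hSy.union (measurableSet_lt measurable_const (Measure.measurable_rnDeriv _ _))
  have hE₂'m : MeasurableSet (Prod.snd ⁻¹' E₂ : Set (X × Y)) := measurable_snd hE₂m
  have hU_meas : Measurable (fun w => ENNReal.ofReal (u w ^ 2)) :=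
    (hmu.pow_const 2).ennreal_ofReal
  have hA_meas : Measurable (fun w => ENNReal.ofReal (a w ^ 2)) :=
    (hma.pow_const 2).ennreal_ofReal
  have hBt_meas : Measurable (fun y => ENNReal.ofReal (b (x₀, y) ^ 2)) :=
    (hmbt.pow_const 2).ennreal_ofReal
  have hBt'_meas : Measurable (fun w : X × Y => ENNReal.ofReal (b (x₀, w.2) ^ 2)) :=
    hBt_meas.comp measurable_snd
  -- bad set
  have hbad : ∫⁻ w in E₁ ∪ Prod.snd ⁻¹' E₂, ENNReal.ofReal (u w ^ 2) ∂μtest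
      ≤ ENNReal.ofReal (16*B^2) * (μtest E₁ + (μtest.map Prod.snd) E₂) := by
    calc ∫⁻ w in E₁ ∪ Prod.snd ⁻¹' E₂, ENNReal.ofReal (u w ^ 2) ∂μtest
        ≤ ∫⁻ _ in E₁ ∪ Prod.snd ⁻¹' E₂, ENNReal.ofReal (16*B^2) ∂μtest := by
          refine lintegral_mono fun w => ENNReal.ofReal_le_ofReal ?_
          nlinarith [hu_bd w, abs_nonneg (u w), sq_abs (u w)]
      _ = ENNReal.ofReal (16*B^2) * μtest (E₁ ∪ Prod.snd ⁻¹' E₂) := setLIntegral_const _ _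
      _ ≤ ENNReal.ofReal (16*B^2) * (μtest E₁ + μtest (Prod.snd ⁻¹' E₂)) :=
          mul_le_mul_right (measure_union_le _ _) _
      _ = ENNReal.ofReal (16*B^2) * (μtest E₁ + (μtest.map Prod.snd) E₂) := by
          rw [Measure.map_apply measurable_snd hE₂m]
  -- good set
  have hgood : ∫⁻ w in (E₁ ∪ Prod.snd ⁻¹' E₂)ᶜ, ENNReal.ofReal (u w ^ 2) ∂μtest
      ≤ 2 * ∫⁻ w in E₁ᶜ, ENNReal.ofReal (a w ^ 2) ∂μtest
        + 2 * ∫⁻ w in (Prod.snd ⁻¹' E₂)ᶜ, ENNReal.ofReal (b (x₀, w.2) ^ 2) ∂μtest := by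
    have hptw : ∀ w : X × Y, ENNReal.ofReal (u w ^ 2)
        ≤ 2 * ENNReal.ofReal (a w ^ 2) + 2 * ENNReal.ofReal (b (x₀, w.2) ^ 2) := by
      intro w
      have hbw : b (x₀, w.2) = b w := (hbt w).symm
      have h1 : u w ^ 2 ≤ 2 * a w ^ 2 + 2 * b (x₀, w.2) ^ 2 := by
        rw [hbw, hu_ab w]
        nlinarith [sq_nonneg (a w - b w)]
      calc ENNReal.ofReal (u w ^ 2)
          ≤ ENNReal.ofReal (2 * a w ^ 2 + 2 * b (x₀, w.2) ^ 2) := ENNReal.ofReal_le_ofReal h1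
        _ = ENNReal.ofReal (2 * a w ^ 2) + ENNReal.ofReal (2 * b (x₀, w.2) ^ 2) :=
            ENNReal.ofReal_add (by positivity) (by positivity)
        _ = 2 * ENNReal.ofReal (a w ^ 2) + 2 * ENNReal.ofReal (b (x₀, w.2) ^ 2) := by
            rw [ENNReal.ofReal_mul (by norm_num), ENNReal.ofReal_mul (by norm_num)]
            norm_num
    calc ∫⁻ w in (E₁ ∪ Prod.snd ⁻¹' E₂)ᶜ, ENNReal.ofReal (u w ^ 2) ∂μtest
        ≤ ∫⁻ w in (E₁ ∪ Prod.snd ⁻¹' E₂)ᶜ,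
            (2 * ENNReal.ofReal (a w ^ 2) + 2 * ENNReal.ofReal (b (x₀, w.2) ^ 2)) ∂μtest :=
          lintegral_mono fun w => hptw w
      _ = ∫⁻ w in (E₁ ∪ Prod.snd ⁻¹' E₂)ᶜ, 2 * ENNReal.ofReal (a w ^ 2) ∂μtest
          + ∫⁻ w in (E₁ ∪ Prod.snd ⁻¹' E₂)ᶜ, 2 * ENNReal.ofReal (b (x₀, w.2) ^ 2) ∂μtest :=
          lintegral_add_left (measurable_const.mul hA_meas) _
      _ = 2 * ∫⁻ w in (E₁ ∪ Prod.snd ⁻¹' E₂)ᶜ, ENNReal.ofReal (a w ^ 2) ∂μtest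
          + 2 * ∫⁻ w in (E₁ ∪ Prod.snd ⁻¹' E₂)ᶜ, ENNReal.ofReal (b (x₀, w.2) ^ 2) ∂μtest := by
          rw [lintegral_const_mul 2 hA_meas,
            lintegral_const_mul 2 hBt'_meas]
      _ ≤ 2 * ∫⁻ w in E₁ᶜ, ENNReal.ofReal (a w ^ 2) ∂μtest
          + 2 * ∫⁻ w in (Prod.snd ⁻¹' E₂)ᶜ, ENNReal.ofReal (b (x₀, w.2) ^ 2) ∂μtest :=
          add_le_add
            (mul_le_mul_right
              (lintegral_mono_set (Set.compl_subset_compl.2 Set.subset_union_left)) 2)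
            (mul_le_mul_right
              (lintegral_mono_set (Set.compl_subset_compl.2 Set.subset_union_right)) 2)
  -- a-part bound
  have hA_bound : ∫⁻ w in E₁ᶜ, ENNReal.ofReal (a w ^ 2) ∂μtest
      ≤ ENNReal.ofReal t₁ * ENNReal.ofReal (riskF μtrain μtrain fstar f) := by
    have h1 := tail_lintegral_bound μtest μtrain hSxy hSxySing t₁ hA_meas
    have h2 : ∫⁻ w, ENNReal.ofReal (a w ^ 2) ∂μtrain
        = ENNReal.ofReal (riskF μtrain μtrain fstar f) := by
      rw [show riskF μtrain μtrain fstar f = ∫ w, a w ^ 2 ∂μtrain from rfl]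
      exact (ofReal_integral_eq_lintegral_ofReal int_a2
        (ae_of_all _ fun w => sq_nonneg _)).symm
    rw [← h2]
    exact h1
  -- b-part bound
  have hB_bound : ∫⁻ w in (Prod.snd ⁻¹' E₂)ᶜ, ENNReal.ofReal (b (x₀, w.2) ^ 2) ∂μtest
      ≤ ENNReal.ofReal t₂ * ENNReal.ofReal (risk μtrain fstar gstar f g) := by
    have h1 : ∫⁻ w in (Prod.snd ⁻¹' E₂)ᶜ, ENNReal.ofReal (b (x₀, w.2) ^ 2) ∂μtest
        = ∫⁻ y in E₂ᶜ, ENNReal.ofReal (b (x₀, y) ^ 2) ∂(μtest.map Prod.snd) := by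
      rw [setLIntegral_map hE₂m.compl hBt_meas measurable_snd]
      rfl
    have h2 := tail_lintegral_bound (μtest.map Prod.snd) (μtrain.map Prod.snd)
      hSy hSySing t₂ hBt_meas
    have h3 : ∫⁻ y, ENNReal.ofReal (b (x₀, y) ^ 2) ∂(μtrain.map Prod.snd)
        = ∫⁻ w, ENNReal.ofReal (b w ^ 2) ∂μtrain := by
      rw [lintegral_map hBt_meas measurable_snd]
      exact lintegral_congr fun w => by rw [← hbt w]
    have h4 : ∫⁻ w, ENNReal.ofReal (b w ^ 2) ∂μtrain
        ≤ ENNReal.ofReal (risk μtrain fstar gstar f g) := by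
      rw [← ofReal_integral_eq_lintegral_ofReal int_b2 (ae_of_all _ fun w => sq_nonneg _)]
      refine ENNReal.ofReal_le_ofReal ?_
      rw [show risk μtrain fstar gstar f g = ∫ w, u w ^ 2 ∂μtrain from rfl]
      exact hJensen
    calc ∫⁻ w in (Prod.snd ⁻¹' E₂)ᶜ, ENNReal.ofReal (b (x₀, w.2) ^ 2) ∂μtest
        = ∫⁻ y in E₂ᶜ, ENNReal.ofReal (b (x₀, y) ^ 2) ∂(μtest.map Prod.snd) := h1
      _ ≤ ENNReal.ofReal t₂ * ∫⁻ y, ENNReal.ofReal (b (x₀, y) ^ 2) ∂(μtrain.map Prod.snd) := h2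
      _ = ENNReal.ofReal t₂ * ∫⁻ w, ENNReal.ofReal (b w ^ 2) ∂μtrain := by rw [h3]
      _ ≤ ENNReal.ofReal t₂ * ENNReal.ofReal (risk μtrain fstar gstar f g) :=
          mul_le_mul_right h4 _
  -- tail masses
  have htm₁ : μtest E₁ = ENNReal.ofReal (tailMass μtest μtrain Sxy t₁) :=
    (ENNReal.ofReal_toReal (measure_ne_top _ _)).symm
  have htm₂ : (μtest.map Prod.snd) E₂
      = ENNReal.ofReal (tailMass (μtest.map Prod.snd) (μtrain.map Prod.snd) Sy t₂) :=
    (ENNReal.ofReal_toReal (measure_ne_top _ _)).symm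
  -- nonnegativity of real quantities
  have hRF0 : 0 ≤ riskF μtrain μtrain fstar f := integral_nonneg fun w => sq_nonneg _
  have hR0 : 0 ≤ risk μtrain fstar gstar f g := integral_nonneg fun w => sq_nonneg _
  have htm₁0 : 0 ≤ tailMass μtest μtrain Sxy t₁ := ENNReal.toReal_nonneg
  have htm₂0 : 0 ≤ tailMass (μtest.map Prod.snd) (μtrain.map Prod.snd) Sy t₂ :=
    ENNReal.toReal_nonneg
  -- assemble the ennreal bound
  have hmainE : ∫⁻ w, ENNReal.ofReal (u w ^ 2) ∂μtest
      ≤ ENNReal.ofReal (2 * (t₁ * riskF μtrain μtrain fstar f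
          + t₂ * risk μtrain fstar gstar f g
          + 16 * B ^ 2 * tailMass μtest μtrain Sxy t₁
          + 16 * B ^ 2 * tailMass (μtest.map Prod.snd) (μtrain.map Prod.snd) Sy t₂)) := by
    have hsplit : ∫⁻ w, ENNReal.ofReal (u w ^ 2) ∂μtest
        = ∫⁻ w in E₁ ∪ Prod.snd ⁻¹' E₂, ENNReal.ofReal (u w ^ 2) ∂μtest
          + ∫⁻ w in (E₁ ∪ Prod.snd ⁻¹' E₂)ᶜ, ENNReal.ofReal (u w ^ 2) ∂μtest :=
      (lintegral_add_compl _ (hE₁m.union hE₂'m)).symm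
    have hRHS : ENNReal.ofReal (2 * (t₁ * riskF μtrain μtrain fstar f
          + t₂ * risk μtrain fstar gstar f g
          + 16 * B ^ 2 * tailMass μtest μtrain Sxy t₁
          + 16 * B ^ 2 * tailMass (μtest.map Prod.snd) (μtrain.map Prod.snd) Sy t₂))
        = 2 * (ENNReal.ofReal t₁ * ENNReal.ofReal (riskF μtrain μtrain fstar f))
          + 2 * (ENNReal.ofReal t₂ * ENNReal.ofReal (risk μtrain fstar gstar f g))
          + 2 * (ENNReal.ofReal (16*B^2) * μtest E₁)
          + 2 * (ENNReal.ofReal (16*B^2) * (μtest.map Prod.snd) E₂) := by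
      rw [htm₁, htm₂]
      rw [ENNReal.ofReal_mul (by norm_num : (0:ℝ) ≤ 2)]
      rw [ENNReal.ofReal_add (by positivity) (by positivity),
        ENNReal.ofReal_add (by positivity) (by positivity),
        ENNReal.ofReal_add (by positivity) (by positivity)]
      rw [ENNReal.ofReal_mul ht₁.le, ENNReal.ofReal_mul ht₂.le,
        ENNReal.ofReal_mul (by positivity : (0:ℝ) ≤ 16*B^2),
        ENNReal.ofReal_mul (by positivity : (0:ℝ) ≤ 16*B^2)]
      have h2 : ENNReal.ofReal (2:ℝ) = 2 := by norm_num
      rw [h2]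
      have h16 : ENNReal.ofReal (16*B^2) = ENNReal.ofReal 16 * ENNReal.ofReal (B^2) := by
        rw [← ENNReal.ofReal_mul (by norm_num)]
      ring
    rw [hsplit, hRHS]
    have hstep : ∫⁻ w in E₁ ∪ Prod.snd ⁻¹' E₂, ENNReal.ofReal (u w ^ 2) ∂μtest
          + ∫⁻ w in (E₁ ∪ Prod.snd ⁻¹' E₂)ᶜ, ENNReal.ofReal (u w ^ 2) ∂μtest
        ≤ ENNReal.ofReal (16*B^2) * (μtest E₁ + (μtest.map Prod.snd) E₂)
          + (2 * (ENNReal.ofReal t₁ * ENNReal.ofReal (riskF μtrain μtrain fstar f))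
            + 2 * (ENNReal.ofReal t₂ * ENNReal.ofReal (risk μtrain fstar gstar f g))) := by
      refine add_le_add hbad (hgood.trans ?_)
      exact add_le_add (mul_le_mul_right hA_bound 2) (mul_le_mul_right hB_bound 2)
    refine hstep.trans ?_
    have hc1 : ENNReal.ofReal (16*B^2) * (μtest E₁ + (μtest.map Prod.snd) E₂)
        ≤ 2 * (ENNReal.ofReal (16*B^2) * μtest E₁)
          + 2 * (ENNReal.ofReal (16*B^2) * (μtest.map Prod.snd) E₂) := by
      rw [mul_add]
      exact add_le_add (le_mul_of_one_le_left zero_le one_le_two)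
        (le_mul_of_one_le_left zero_le one_le_two)
    calc _ ≤ (2 * (ENNReal.ofReal (16*B^2) * μtest E₁)
          + 2 * (ENNReal.ofReal (16*B^2) * (μtest.map Prod.snd) E₂))
          + (2 * (ENNReal.ofReal t₁ * ENNReal.ofReal (riskF μtrain μtrain fstar f))
            + 2 * (ENNReal.ofReal t₂ * ENNReal.ofReal (risk μtrain fstar gstar f g))) :=
        add_le_add_left hc1 _
      _ = _ := by ring
  -- conclude in ℝ
  have hlhs : risk μtest fstar gstar f g = (∫⁻ w, ENNReal.ofReal (u w ^ 2) ∂μtest).toReal := by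
    rw [show risk μtest fstar gstar f g = ∫ w, u w ^ 2 ∂μtest from rfl]
    exact integral_eq_lintegral_of_nonneg_ae (ae_of_all _ fun w => sq_nonneg _)
      (hmu.pow_const 2).aestronglyMeasurable
  have hT0 : 0 ≤ 2 * (t₁ * riskF μtrain μtrain fstar f
      + t₂ * risk μtrain fstar gstar f g
      + 16 * B ^ 2 * tailMass μtest μtrain Sxy t₁
      + 16 * B ^ 2 * tailMass (μtest.map Prod.snd) (μtrain.map Prod.snd) Sy t₂) := by
    have := mul_nonneg ht₁.le hRF0
    have := mul_nonneg ht₂.le hR0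
    have h1 : (0:ℝ) ≤ 16 * B^2 * tailMass μtest μtrain Sxy t₁ := by positivity
    have h2 : (0:ℝ) ≤ 16 * B^2 * tailMass (μtest.map Prod.snd) (μtrain.map Prod.snd) Sy t₂ := by
      positivity
    linarith
  rw [hlhs]
  calc (∫⁻ w, ENNReal.ofReal (u w ^ 2) ∂μtest).toReal
      ≤ (ENNReal.ofReal (2 * (t₁ * riskF μtrain μtrain fstar f
          + t₂ * risk μtrain fstar gstar f g
          + 16 * B ^ 2 * tailMass μtest μtrain Sxy t₁
          + 16 * B ^ 2 * tailMass (μtest.map Prod.snd) (μtrain.map Prod.snd) Sy t₂))).toReal :=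
        ENNReal.toReal_mono ENNReal.ofReal_ne_top hmainE
    _ = _ := ENNReal.toReal_ofReal hT0

end
end
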